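/- Let G be a finite tree whose vertices are colored black and white, such that every white vertex has degree at least three. Then the number of black vertices is strictly greater than the number of white vertices. -/

import Mathlib

/-!
By the handshake lemma a tree on `n` vertices has degree sum `2n - 2`. If it has at least two
vertices, every vertex has degree at least one, so white vertices contribute at least `3` and
black vertices at least `1` to this sum: `3w + b ≤ 2(w + b) - 2`, i.e. `w + 2 ≤ b`.
A one-vertex tree has no vertex of degree three, so its vertex is black.
-/

open Finset

namespace SimpleGraph

variable {V : Type*} [Fintype V] {G : SimpleGraph V} [DecidableRel G.Adj]

theorem IsTree.sum_degrees_add_two (hT : G.IsTree) :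
    ∑ v, G.degree v + 2 = 2 * Fintype.card V := by
  rw [sum_degrees_eq_twice_card_edges, ← hT.card_edgeFinset]
  ring

theorem IsTree.card_add_two_le_card_compl [Nontrivial V] [DecidableEq V] (hT : G.IsTree)
    {s : Finset V} (hs : ∀ v ∈ s, 3 ≤ G.degree v) : #s + 2 ≤ #sᶜ := by
  have hsplit : ∑ v, G.degree v = ∑ v ∈ s, G.degree v + ∑ v ∈ sᶜ, G.degree v :=
    (sum_add_sum_compl s _).symm
  have hs_sum : 3 * #s ≤ ∑ v ∈ s, G.degree v := by
    simpa [mul_comm] using card_nsmul_le_sum s _ 3 hs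
  have hcompl_sum : #sᶜ ≤ ∑ v ∈ sᶜ, G.degree v := by
    simpa using card_nsmul_le_sum sᶜ (G.degree ·) 1 fun v _ ↦
      hT.connected.preconnected.degree_pos_of_nontrivial v
  have hcard := card_add_card_compl s
  have hsum := hT.sum_degrees_add_two
  omega

theorem IsTree.card_lt_card_compl [DecidableEq V] (hT : G.IsTree) {s : Finset V}
    (hs : ∀ v ∈ s, 3 ≤ G.degree v) : #s < #sᶜ := by
  cases subsingleton_or_nontrivial V with
  | inl _ =>
    have hs_empty : s = ∅ := by
      refine eq_empty_of_forall_notMem fun v hv ↦ ?_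
      obtain ⟨w, hvw⟩ := G.degree_pos_iff_exists_adj v |>.mp (by linarith [hs v hv])
      exact G.ne_of_adj hvw (Subsingleton.elim v w)
    have : Nonempty V := hT.connected.nonempty
    simp [hs_empty, card_univ, Fintype.card_pos]
  | inr _ => linarith [hT.card_add_two_le_card_compl hs]

end SimpleGraph

/-- In a finite tree colored black and white (black = `true`), if every white
vertex has degree at least three, then there are strictly more black vertices
than white vertices. -/
theorem tree_coloring_black_gt_white
    {V : Type*} [Fintype V] [DecidableEq V]
    (G : SimpleGraph V) [DecidableRel G.Adj]
    (hT : G.IsTree)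
    (color : V → Bool)
    (hwhite : ∀ v, color v = false → 3 ≤ G.degree v) :
    (Finset.univ.filter (fun v => color v = false)).card
      < (Finset.univ.filter (fun v => color v = true)).card := by
  have hblack :
      univ.filter (fun v => color v = true) = (univ.filter fun v => color v = false)ᶜ := by
    ext v
    simp
  rw [hblack]
  exact hT.card_lt_card_compl fun v hv ↦ hwhite v (by simpa using hv)
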